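/- In the 2×2 game with A's payoffs [[1,2],[0,1]] and B's payoffs [[.5,0],[0,1]], there is NO contract D_A with all equilibrium transfers nonnegative such that Γ(D_A) has a unique Nash equilibrium achieving the maxagg aggregate payoff 5/3 exactly; however, for every ε > 0 there is a contract D_A(ε) with a unique Nash equilibrium whose aggregate payoff σ_A^T U_A σ_B exceeds 5/3 − ε. -/

import Mathlib

/-!
Against mixed strategies `a`, `b` the aggregate payoff is `1 + a 0 - b 0`. If `b 0 > 0`, then
`a 0 = 2/3 + b 0 > 2/3` makes B strictly prefer its first column, so `b 0 = 1`, which is absurd;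
hence `5/3` is attained only at `a = (2/3, 1/3)`, `b = L`. There A mixes, so A is indifferent
between its rows against `L`, and `(pure second row, L)` is a second equilibrium, whatever the
contract.

After the contract `D_A(e)` neither player has a pure best response to a pure best response, so
the only equilibrium is the totally mixed one where each player keeps the other indifferent:
`a = (2/3, 1/3)` and `b 0 = 2e/(1+2e)`, with aggregate payoff `5/3 - 2e/(1+2e) > 5/3 - 2e`.
-/

open Finset

/-- Mixed strategies over `n` pure strategies: nonnegative vectors summing to 1. -/
def mixed (n : ℕ) : Set (Fin n → ℝ) := {σ | (∀ i, 0 ≤ σ i) ∧ ∑ i, σ i = 1}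

/-- Expected payoff `σ_A^T U σ_B`. -/
def pay {m n : ℕ} (U : Fin m → Fin n → ℝ) (a : Fin m → ℝ) (b : Fin n → ℝ) : ℝ :=
  ∑ i, ∑ j, a i * U i j * b j

/-- The pure strategy `k` as a mixed strategy. -/
def pureStrat {n : ℕ} (k : Fin n) : Fin n → ℝ := fun i => if i = k then 1 else 0

/-- `b` is a best response of the column player (payoffs `UB`) to `a`. -/
def BRB {m n : ℕ} (UB : Fin m → Fin n → ℝ) (a : Fin m → ℝ) (b : Fin n → ℝ) : Prop :=
  b ∈ mixed n ∧ ∀ b' ∈ mixed n, pay UB a b' ≤ pay UB a b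

/-- `a` is a best response of the row player (payoffs `UA`) to `b`. -/
def BRA {m n : ℕ} (UA : Fin m → Fin n → ℝ) (a : Fin m → ℝ) (b : Fin n → ℝ) : Prop :=
  a ∈ mixed m ∧ ∀ a' ∈ mixed m, pay UA a' b ≤ pay UA a b

/-- Nash equilibrium of the bimatrix game `(UA, UB)`. -/
def NashEq {m n : ℕ} (UA UB : Fin m → Fin n → ℝ) (a : Fin m → ℝ) (b : Fin n → ℝ) : Prop :=
  a ∈ mixed m ∧ b ∈ mixed n ∧
  (∀ a' ∈ mixed m, pay UA a' b ≤ pay UA a b) ∧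
  (∀ b' ∈ mixed n, pay UB a b' ≤ pay UB a b)

lemma pureStrat_mem_mixed {n : ℕ} (k : Fin n) : pureStrat k ∈ mixed n :=
  ⟨fun i => by unfold pureStrat; split_ifs <;> norm_num, by simp [pureStrat]⟩

lemma mem_mixed_two_iff {σ : Fin 2 → ℝ} :
    σ ∈ mixed 2 ↔ 0 ≤ σ 0 ∧ 0 ≤ σ 1 ∧ σ 0 + σ 1 = 1 := by
  simp [mixed, Fin.forall_fin_two, Fin.sum_univ_two, and_assoc]

lemma eq_of_mem_mixed_two {σ : Fin 2 → ℝ} (h : σ ∈ mixed 2) : σ = ![σ 0, 1 - σ 0] := by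
  ext i
  fin_cases i
  · rfl
  · show σ 1 = 1 - σ 0
    linarith [(mem_mixed_two_iff.1 h).2.2]

lemma pay_swap {m n : ℕ} (U : Fin m → Fin n → ℝ) (a : Fin m → ℝ) (b : Fin n → ℝ) :
    pay (Function.swap U) b a = pay U a b := by
  unfold pay
  rw [Finset.sum_comm]
  simp only [Function.swap]
  exact Finset.sum_congr rfl fun i _ => Finset.sum_congr rfl fun j _ => by ring

lemma brb_iff_bra_swap {m n : ℕ} {U : Fin m → Fin n → ℝ} {a : Fin m → ℝ} {b : Fin n → ℝ} :
    BRB U a b ↔ BRA (Function.swap U) b a := by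
  simp only [BRB, BRA, pay_swap]

lemma nashEq_iff_bra_brb {m n : ℕ} {UA UB : Fin m → Fin n → ℝ} {a : Fin m → ℝ}
    {b : Fin n → ℝ} : NashEq UA UB a b ↔ BRA UA a b ∧ BRB UB a b := by
  unfold NashEq BRA BRB
  tauto

def rowGain (U : Fin 2 → Fin 2 → ℝ) (b : Fin 2 → ℝ) : ℝ :=
  (U 0 0 - U 1 0) * b 0 + (U 0 1 - U 1 1) * b 1

lemma pay_sub_pay_two (U : Fin 2 → Fin 2 → ℝ) {a a' : Fin 2 → ℝ} (b : Fin 2 → ℝ)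
    (ha : a 0 + a 1 = 1) (ha' : a' 0 + a' 1 = 1) :
    pay U a' b - pay U a b = (a' 0 - a 0) * rowGain U b := by
  simp only [pay, rowGain, Fin.sum_univ_two]
  linear_combination (U 1 0 * b 0 + U 1 1 * b 1) * (ha' - ha)

theorem bra_two_iff {U : Fin 2 → Fin 2 → ℝ} {a b : Fin 2 → ℝ} :
    BRA U a b ↔ a ∈ mixed 2 ∧ 0 ≤ a 0 * rowGain U b ∧ a 1 * rowGain U b ≤ 0 := by
  constructor
  · rintro ⟨ha, hbest⟩
    have hs := (mem_mixed_two_iff.1 ha).2.2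
    have h0 := hbest _ (pureStrat_mem_mixed 0)
    have h1 := hbest _ (pureStrat_mem_mixed 1)
    rw [← sub_nonpos, pay_sub_pay_two U b hs (by simp [pureStrat])] at h0 h1
    simp only [pureStrat] at h0 h1
    norm_num at h0 h1
    exact ⟨ha, by linarith, by rw [show a 1 = 1 - a 0 by linarith]; linarith⟩
  · rintro ⟨ha, h0, h1⟩
    refine ⟨ha, fun a' ha' => ?_⟩
    obtain ⟨h0', h1', hs'⟩ := mem_mixed_two_iff.1 ha'
    obtain ⟨ha0, ha1, hs⟩ := mem_mixed_two_iff.1 ha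
    rw [← sub_nonpos, pay_sub_pay_two U b hs hs']
    rcases le_total 0 (rowGain U b) with hg | hg <;> nlinarith

lemma bra_of_rowGain_eq_zero {U : Fin 2 → Fin 2 → ℝ} {a b : Fin 2 → ℝ} (ha : a ∈ mixed 2)
    (hg : rowGain U b = 0) : BRA U a b :=
  bra_two_iff.2 ⟨ha, by simp [hg], by simp [hg]⟩

namespace BRA

variable {U : Fin 2 → Fin 2 → ℝ} {a b : Fin 2 → ℝ}

lemma snd_eq_zero_of_rowGain_pos (h : BRA U a b) (hg : 0 < rowGain U b) : a 1 = 0 := by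
  obtain ⟨ha, -, h1⟩ := bra_two_iff.1 h
  nlinarith [(mem_mixed_two_iff.1 ha).2.1]

lemma fst_eq_zero_of_rowGain_neg (h : BRA U a b) (hg : rowGain U b < 0) : a 0 = 0 := by
  obtain ⟨ha, h0, -⟩ := bra_two_iff.1 h
  nlinarith [(mem_mixed_two_iff.1 ha).1]

lemma rowGain_eq_zero (h : BRA U a b) (h0 : 0 < a 0) (h1 : 0 < a 1) : rowGain U b = 0 := by
  obtain ⟨-, hg0, hg1⟩ := bra_two_iff.1 h
  exact le_antisymm (nonpos_of_mul_nonpos_right hg1 h1) (nonneg_of_mul_nonneg_right hg0 h0)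

end BRA

namespace Example2

noncomputable def UA : Fin 2 → Fin 2 → ℝ := ![![1, 2], ![0, 1]]
noncomputable def UB : Fin 2 → Fin 2 → ℝ := ![![1/2, 0], ![0, 1]]
/-- The paper's contract `D_A(e)`: after it, A's payoffs are `[[-1/2, 3/2 + e], [0, 3/2]]`. -/
noncomputable def contract (e : ℝ) : Fin 2 → Fin 2 → ℝ := ![![3/2, 1/2 - e], ![0, -1/2]]

lemma pay_UA {a b : Fin 2 → ℝ} (ha : a ∈ mixed 2) (hb : b ∈ mixed 2) :
    pay UA a b = 1 + a 0 - b 0 := by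
  obtain ⟨-, -, ha⟩ := mem_mixed_two_iff.1 ha
  obtain ⟨-, -, hb⟩ := mem_mixed_two_iff.1 hb
  simp only [pay, UA, Fin.sum_univ_two, Matrix.cons_val_zero, Matrix.cons_val_one,
    Matrix.cons_val_fin_one]
  linear_combination (1 - b 0) * ha + (2 * a 0 + a 1) * hb

lemma rowGain_swap_UB (a : Fin 2 → ℝ) : rowGain (Function.swap UB) a = a 0 / 2 - a 1 := by
  simp only [rowGain, UB, Function.swap, Matrix.cons_val_zero, Matrix.cons_val_one,
    Matrix.cons_val_fin_one]
  ring

lemma rowGain_UA_sub_contract (e : ℝ) (b : Fin 2 → ℝ) :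
    rowGain (UA - contract e) b = e * b 1 - b 0 / 2 := by
  simp only [rowGain, UA, contract, Pi.sub_apply, Matrix.cons_val_zero, Matrix.cons_val_one,
    Matrix.cons_val_fin_one]
  ring

lemma eq_of_brb_of_pay_UA_eq {a b : Fin 2 → ℝ} (ha : a ∈ mixed 2) (hB : BRB UB a b)
    (hpay : pay UA a b = 5/3) : a 0 = 2/3 ∧ b 0 = 0 := by
  rw [brb_iff_bra_swap] at hB
  obtain ⟨-, ha1, has⟩ := mem_mixed_two_iff.1 ha
  obtain ⟨hb0, -, hbs⟩ := mem_mixed_two_iff.1 hB.1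
  rw [pay_UA ha hB.1] at hpay
  have hb : b 0 = 0 := by
    by_contra hne
    have hpos : 0 < rowGain (Function.swap UB) a := by
      rw [rowGain_swap_UB]
      linarith [lt_of_le_of_ne hb0 (Ne.symm hne)]
    linarith [hB.snd_eq_zero_of_rowGain_pos hpos]
  exact ⟨by linarith, hb⟩

/-- At the maxagg profile A mixes, hence is indifferent between its rows. -/
lemma nashEq_pureStrat_one_of_pay_UA_eq {DA : Fin 2 → Fin 2 → ℝ} {a b : Fin 2 → ℝ}
    (h : NashEq (UA - DA) UB a b) (hpay : pay UA a b = 5/3) :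
    NashEq (UA - DA) UB (pureStrat 1) b ∧ a 0 = 2/3 := by
  obtain ⟨hA, hB⟩ := nashEq_iff_bra_brb.1 h
  obtain ⟨ha0, hb0⟩ := eq_of_brb_of_pay_UA_eq hA.1 hB hpay
  have ha1 : a 1 = 1/3 := by linarith [(mem_mixed_two_iff.1 hA.1).2.2]
  have hb1 : b 1 = 1 := by linarith [(mem_mixed_two_iff.1 hB.1).2.2]
  have hindiff := hA.rowGain_eq_zero (by linarith) (by linarith)
  refine ⟨nashEq_iff_bra_brb.2 ⟨bra_of_rowGain_eq_zero (pureStrat_mem_mixed 1) hindiff, ?_⟩, ha0⟩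
  rw [brb_iff_bra_swap, bra_two_iff, rowGain_swap_UB]
  exact ⟨(brb_iff_bra_swap.1 hB).1, by simp [hb0], by simp [pureStrat, hb1]⟩

theorem not_exists_contract_unique_nashEq_pay_UA_eq :
    ¬ ∃ (DA : Fin 2 → Fin 2 → ℝ) (a b : Fin 2 → ℝ), NashEq (UA - DA) UB a b ∧
      pay UA a b = 5/3 ∧
      ∀ a' b', NashEq (UA - DA) UB a' b' → a' = a ∧ b' = b := by
  rintro ⟨DA, a, b, h, hpay, huniq⟩
  obtain ⟨hswitch, ha0⟩ := nashEq_pureStrat_one_of_pay_UA_eq h hpay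
  have := congrFun (huniq _ _ hswitch).1 0
  simp only [pureStrat] at this
  norm_num [← this] at ha0

lemma nashEq_contract_iff {e : ℝ} (he : 0 < e) {a b : Fin 2 → ℝ} :
    NashEq (UA - contract e) UB a b ↔
      a = ![2/3, 1/3] ∧ b = ![2 * e / (1 + 2 * e), 1 - 2 * e / (1 + 2 * e)] := by
  rw [nashEq_iff_bra_brb, brb_iff_bra_swap]
  have hgA := rowGain_UA_sub_contract e b
  have hgB := rowGain_swap_UB a
  constructor
  · rintro ⟨hA, hB⟩
    obtain ⟨ha0, ha1, has⟩ := mem_mixed_two_iff.1 hA.1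
    obtain ⟨hb0, hb1, hbs⟩ := mem_mixed_two_iff.1 hB.1
    have hindiffB : rowGain (Function.swap UB) a = 0 := by
      rcases lt_trichotomy (rowGain (Function.swap UB) a) 0 with hneg | hzero | hpos
      · have hb0' := hB.fst_eq_zero_of_rowGain_neg hneg
        have := hA.snd_eq_zero_of_rowGain_pos (by rw [hgA, hb0']; nlinarith)
        linarith
      · exact hzero
      · have hb1' := hB.snd_eq_zero_of_rowGain_pos hpos
        have := hA.fst_eq_zero_of_rowGain_neg (by rw [hgA, hb1']; linarith)
        linarith
    have ha0' : a 0 = 2/3 := by linarith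
    have hindiffA := hA.rowGain_eq_zero (by linarith) (by linarith)
    have hb0' : b 0 = 2 * e / (1 + 2 * e) := by
      rw [eq_div_iff (by positivity)]
      linear_combination -2 * (hgA.symm.trans hindiffA) + 2 * e * hbs
    constructor
    · rw [eq_of_mem_mixed_two hA.1, ha0']
      norm_num
    · rw [eq_of_mem_mixed_two hB.1, hb0']
  · rintro ⟨rfl, rfl⟩
    have hq0 : 0 ≤ 2 * e / (1 + 2 * e) := by positivity
    have hq1 : 2 * e / (1 + 2 * e) < 1 := by rw [div_lt_one (by positivity)]; linarith
    refine ⟨bra_of_rowGain_eq_zero ?_ ?_, bra_of_rowGain_eq_zero ?_ ?_⟩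
    · exact mem_mixed_two_iff.2 ⟨by norm_num, by norm_num, by norm_num⟩
    · rw [hgA]
      simp only [Matrix.cons_val_zero, Matrix.cons_val_one, Matrix.cons_val_fin_one]
      field_simp
      ring
    · exact mem_mixed_two_iff.2 ⟨hq0, by simpa using hq1.le, by simp⟩
    · rw [hgB]
      norm_num

theorem exists_contract_unique_nashEq_pay_UA_gt {ε : ℝ} (hε : 0 < ε) :
    ∃ (DA : Fin 2 → Fin 2 → ℝ) (a b : Fin 2 → ℝ), NashEq (UA - DA) UB a b ∧
      (∀ a' b', NashEq (UA - DA) UB a' b' → a' = a ∧ b' = b) ∧ pay UA a b > 5/3 - ε := by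
  have he : 0 < ε / 2 := by positivity
  have h := (nashEq_contract_iff he).2 ⟨rfl, rfl⟩
  refine ⟨contract (ε / 2), _, _, h, fun a' b' h' => (nashEq_contract_iff he).1 h', ?_⟩
  rw [pay_UA h.1 h.2.1]
  have : 2 * (ε / 2) / (1 + 2 * (ε / 2)) < ε := by
    rw [div_lt_iff₀ (by positivity)]
    nlinarith
  simp only [Matrix.cons_val_zero]
  linarith

end Example2

/-- In the game `U_A = [[1,2],[0,1]]`, `U_B = [[1/2,0],[0,1]]`: no contract with
nonnegative equilibrium transfers yields a unique Nash equilibrium attaining the maxagg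
`5/3` exactly; but for every `ε > 0` some contract yields a unique Nash equilibrium whose
aggregate payoff exceeds `5/3 − ε`. -/
theorem stmt_19 :
    let UA : Fin 2 → Fin 2 → ℝ := ![![1, 2], ![0, 1]]
    let UB : Fin 2 → Fin 2 → ℝ := ![![1/2, 0], ![0, 1]]
    (¬ ∃ DA : Fin 2 → Fin 2 → ℝ,
      (∀ (a : Fin 2 → ℝ) (b : Fin 2 → ℝ), NashEq (UA - DA) UB a b → 0 ≤ pay DA a b) ∧
      ∃ (a : Fin 2 → ℝ) (b : Fin 2 → ℝ), NashEq (UA - DA) UB a b ∧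
        pay UA a b = 5/3 ∧
        (∀ (a' : Fin 2 → ℝ) (b' : Fin 2 → ℝ),
          NashEq (UA - DA) UB a' b' → a' = a ∧ b' = b)) ∧
    (∀ ε > (0:ℝ), ∃ DA : Fin 2 → Fin 2 → ℝ,
      ∃ (a : Fin 2 → ℝ) (b : Fin 2 → ℝ), NashEq (UA - DA) UB a b ∧
        (∀ (a' : Fin 2 → ℝ) (b' : Fin 2 → ℝ),
          NashEq (UA - DA) UB a' b' → a' = a ∧ b' = b) ∧
        pay UA a b > 5/3 - ε) :=
  ⟨fun ⟨DA, _, h⟩ => Example2.not_exists_contract_unique_nashEq_pay_UA_eq ⟨DA, h⟩,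
    fun _ hε => Example2.exists_contract_unique_nashEq_pay_UA_gt hε⟩
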